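/- arXiv:1509.01541 — 4 statements merged into one kernel-verified Lean document; each statement's English description precedes it below -/
import Mathlib

section
/- Under the hypotheses of the previous two bounds (Z with mean μ and covariance I_k, U₁ with mean 0 and covariance A, R = P'P positive definite, ψ₀ = λ_min(R), ψ₁ = max_i|λ_i(B)| with B = [[0,P'],[P,0]]), the quantity η‡ = E[|U₁'PZ|/(Z'RZ)] satisfies, for every α > 0, η‡ ≤ (α²ψ₁/2)·ω + ψ₁·(tr(A)+k+μ'μ)/(α²ψ₀), where ω = E[1/(Z'RZ)]. -/
/-!
Cauchy–Schwarz and AM–GM give, pointwise and with `c = α²ψ₁`,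
`|U₁'PZ| / (Z'RZ) ≤ (c/2) / (Z'RZ) + U₁'U₁ / (2c)`, since `Z'RZ = |PZ|²`. Taking expectations,
`E[U₁'U₁] = tr A`, and `tr A / (2α²ψ₁) ≤ ψ₁ (tr A + k + m'm) / (α²ψ₀)` because `ψ₀ ≤ ψ₁²`:
if `PᵀP v = s² v` with `s ≠ 0`, then `(v, s⁻¹ P v)` is an eigenvector of `B` with eigenvalue `s`.
-/

open Matrix MeasureTheory

theorem div_le_half_mul_inv_add_div_of_sq_le_mul {b s q c : ℝ} (hc : 0 < c) (hs : 0 ≤ s)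
    (hq : 0 ≤ q) (hb : b ^ 2 ≤ s * q) : b / q ≤ c / 2 * q⁻¹ + s / (2 * c) := by
  rcases hq.eq_or_lt with rfl | hq
  · simp only [div_zero, _root_.inv_zero, mul_zero, zero_add]
    positivity
  · have hrhs : (c / 2 * q⁻¹ + s / (2 * c)) * q = (c ^ 2 + s * q) / (2 * c) := by
      field_simp
    rw [div_le_iff₀ hq, hrhs, le_div_iff₀ (by positivity)]
    nlinarith [sq_nonneg (b - c)]

namespace Matrix

variable {R m n : Type*} [Fintype m] [Fintype n]

theorem dotProduct_transpose_mul_self_mulVec (A : Matrix m n ℝ) (v : n → ℝ) :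
    v ⬝ᵥ (Aᵀ * A) *ᵥ v = A *ᵥ v ⬝ᵥ A *ᵥ v := by
  rw [← mulVec_mulVec, dotProduct_mulVec, vecMul_transpose]

theorem dotProduct_self_nonneg (v : n → ℝ) : 0 ≤ v ⬝ᵥ v :=
  Finset.sum_nonneg fun i _ => mul_self_nonneg (v i)

theorem sq_dotProduct_le (u v : n → ℝ) : (u ⬝ᵥ v) ^ 2 ≤ (u ⬝ᵥ u) * (v ⬝ᵥ v) := by
  simpa only [dotProduct, sq] using Finset.sum_mul_sq_le_sq_mul_sq Finset.univ u v

theorem abs_dotProduct_div_dotProduct_self_le (u v : n → ℝ) {c : ℝ} (hc : 0 < c) :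
    |u ⬝ᵥ v| / (v ⬝ᵥ v) ≤ c / 2 * (v ⬝ᵥ v)⁻¹ + u ⬝ᵥ u / (2 * c) :=
  div_le_half_mul_inv_add_div_of_sq_le_mul hc (dotProduct_self_nonneg u) (dotProduct_self_nonneg v)
    (by rw [sq_abs]; exact sq_dotProduct_le u v)

section Spectrum

variable [DecidableEq n]

theorem mem_spectrum_of_mulVec_eq_smul [Field R] {A : Matrix n n R} {v : n → R} {c : R}
    (hv : v ≠ 0) (h : A *ᵥ v = c • v) : c ∈ spectrum R A := by
  rw [← spectrum_toLin']
  refine Module.End.HasEigenvalue.mem_spectrum <|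
    Module.End.hasEigenvalue_of_hasEigenvector (x := v) ⟨?_, hv⟩
  rwa [Module.End.mem_eigenspace_iff, toLin'_apply]

theorem mem_spectrum_fromBlocks_of_transpose_mul_self_mulVec [DecidableEq m] [Field R]
    {P : Matrix m n R} {v : n → R} {s : R} (hs : s ≠ 0) (hv : v ≠ 0)
    (h : (Pᵀ * P) *ᵥ v = s ^ 2 • v) :
    s ∈ spectrum R (fromBlocks 0 Pᵀ P 0) := by
  refine mem_spectrum_of_mulVec_eq_smul (v := Sum.elim v (s⁻¹ • P *ᵥ v)) ?_ ?_
  · intro h0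
    exact hv (funext fun i => congrFun h0 (Sum.inl i))
  · simp only [fromBlocks_mulVec, zero_mulVec, zero_add, Sum.elim_comp_inl,
      Sum.elim_comp_inr, mulVec_smul, mulVec_mulVec, h, smul_smul]
    ext (i | i) <;> simp only [Matrix.zero_mul, zero_mulVec, smul_zero, add_zero, Sum.elim_inl,
      Sum.elim_inr, Pi.smul_apply, smul_eq_mul] <;> field_simp

theorem PosDef.exists_eigenvalues_eq_sq_eigenvalues_fromBlocks [DecidableEq m] {P : Matrix m n ℝ}
    (hR : (Pᵀ * P).PosDef) (hB : (fromBlocks 0 Pᵀ P 0).IsHermitian) (i : n) :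
    ∃ j, hR.1.eigenvalues i = hB.eigenvalues j ^ 2 := by
  have hpos := hR.eigenvalues_pos i
  have hv : (hR.1.eigenvectorBasis i : n → ℝ) ≠ 0 := by
    simpa using hR.1.eigenvectorBasis.orthonormal.ne_zero i
  have hmem := mem_spectrum_fromBlocks_of_transpose_mul_self_mulVec (Real.sqrt_pos.2 hpos).ne' hv
    (by rw [Real.sq_sqrt hpos.le]; exact hR.1.mulVec_eigenvectorBasis i)
  obtain ⟨j, hj⟩ := hB.spectrum_real_eq_range_eigenvalues ▸ hmem
  exact ⟨j, by rw [hj, Real.sq_sqrt hpos.le]⟩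

theorem PosDef.inf'_eigenvalues_le_sq_sup'_abs_eigenvalues_fromBlocks [DecidableEq m]
    {P : Matrix m n ℝ} (hR : (Pᵀ * P).PosDef) (hB : (fromBlocks 0 Pᵀ P 0).IsHermitian)
    (hn : (Finset.univ : Finset n).Nonempty) (hnm : (Finset.univ : Finset (n ⊕ m)).Nonempty) :
    Finset.univ.inf' hn (fun i => hR.1.eigenvalues i)
      ≤ (Finset.univ.sup' hnm fun j => |hB.eigenvalues j|) ^ 2 := by
  obtain ⟨i, -, hi⟩ := Finset.exists_mem_eq_inf' hn fun i => hR.1.eigenvalues i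
  obtain ⟨j, hj⟩ := hR.exists_eigenvalues_eq_sq_eigenvalues_fromBlocks hB i
  rw [hi, hj, ← sq_abs]
  exact pow_le_pow_left₀ (abs_nonneg _) (Finset.le_sup' (fun j => |hB.eigenvalues j|)
    (Finset.mem_univ j)) 2

end Spectrum

end Matrix

section Expectation

variable {Ω n : Type*} [MeasurableSpace Ω] {μ : Measure Ω} [Fintype n]

theorem integrable_dotProduct_self {U : Ω → n → ℝ}
    (hU : ∀ i, Integrable (fun ω => U ω i * U ω i) μ) : Integrable (fun ω => U ω ⬝ᵥ U ω) μ :=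
  integrable_finsetSum _ fun i _ => hU i

theorem integral_dotProduct_self_eq_trace {U : Ω → n → ℝ} {A : Matrix n n ℝ}
    (hU : ∀ i, Integrable (fun ω => U ω i * U ω i) μ) (hA : ∀ i, ∫ ω, U ω i * U ω i ∂μ = A i i) :
    ∫ ω, U ω ⬝ᵥ U ω ∂μ = A.trace := by
  simp only [dotProduct]
  rw [integral_finsetSum _ fun i _ => hU i]
  exact Finset.sum_congr rfl fun i _ => hA i

theorem lintegral_ofReal_le_mul_lintegral_add_integral {f g h : Ω → ℝ} {a : ℝ} (ha : 0 ≤ a)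
    (hh : Integrable h μ) (hh0 : 0 ≤ᵐ[μ] h) (hf : ∀ᵐ ω ∂μ, f ω ≤ a * g ω + h ω) :
    ∫⁻ ω, ENNReal.ofReal (f ω) ∂μ
      ≤ ENNReal.ofReal a * ∫⁻ ω, ENNReal.ofReal (g ω) ∂μ + ENNReal.ofReal (∫ ω, h ω ∂μ) := by
  calc ∫⁻ ω, ENNReal.ofReal (f ω) ∂μ
      ≤ ∫⁻ ω, ENNReal.ofReal a * ENNReal.ofReal (g ω) + ENNReal.ofReal (h ω) ∂μ := by
        refine lintegral_mono_ae (hf.mono fun ω hω => ?_)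
        rw [← ENNReal.ofReal_mul ha]
        exact (ENNReal.ofReal_le_ofReal hω).trans ENNReal.ofReal_add_le
    _ = _ := by
      rw [lintegral_add_right' _ hh.aemeasurable.ennreal_ofReal,
        lintegral_const_mul' _ _ ENNReal.ofReal_ne_top, ofReal_integral_eq_lintegral_ofReal hh hh0]

end Expectation

theorem eta_ddag_bound_general
    {Ω : Type*} [MeasurableSpace Ω] (μ : Measure Ω) [IsProbabilityMeasure μ]
    (k : ℕ) (hk : 0 < k) (P : Matrix (Fin k) (Fin k) ℝ)
    (hR : (Pᵀ * P).PosDef)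
    (hB : (Matrix.fromBlocks (0 : Matrix (Fin k) (Fin k) ℝ) Pᵀ P 0).IsHermitian)
    (A : Matrix (Fin k) (Fin k) ℝ)
    (Z U₁ : Ω → Fin k → ℝ)
    (m : Fin k → ℝ)
    (hU2 : ∀ i j, Integrable (fun ω => U₁ ω i * U₁ ω j) μ)
    (hUcov : ∀ i j, ∫ ω, U₁ ω i * U₁ ω j ∂μ = A i j)
    (α : ℝ) (hα : 0 < α) :
    ∫⁻ ω, ENNReal.ofReal (|U₁ ω ⬝ᵥ P.mulVec (Z ω)| / (Z ω ⬝ᵥ (Pᵀ * P).mulVec (Z ω))) ∂μ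
      ≤ ENNReal.ofReal (α ^ 2 *
            (Finset.univ.sup' ⟨Sum.inl ⟨0, hk⟩, Finset.mem_univ _⟩
              fun i => |hB.eigenvalues i|) / 2)
          * ∫⁻ ω, ENNReal.ofReal ((Z ω ⬝ᵥ (Pᵀ * P).mulVec (Z ω))⁻¹) ∂μ
        + ENNReal.ofReal
          ((Finset.univ.sup' ⟨Sum.inl ⟨0, hk⟩, Finset.mem_univ _⟩
              fun i => |hB.eigenvalues i|)
            * (A.trace + k + m ⬝ᵥ m)
            / (α ^ 2 *
                (Finset.univ.inf' ⟨⟨0, hk⟩, Finset.mem_univ _⟩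
                  fun i => hR.1.eigenvalues i))) := by
  set ψ₁ := Finset.univ.sup' ⟨Sum.inl ⟨0, hk⟩, Finset.mem_univ _⟩ fun i => |hB.eigenvalues i|
  set ψ₀ := Finset.univ.inf' ⟨⟨0, hk⟩, Finset.mem_univ _⟩ fun i => hR.1.eigenvalues i
  have hψ₀ : 0 < ψ₀ := (Finset.lt_inf'_iff _).2 fun i _ => hR.eigenvalues_pos i
  have hψ₀₁ : ψ₀ ≤ ψ₁ ^ 2 := hR.inf'_eigenvalues_le_sq_sup'_abs_eigenvalues_fromBlocks hB _ _
  have hψ₁ : 0 < ψ₁ := by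
    have : 0 ≤ ψ₁ := (abs_nonneg _).trans <|
      Finset.le_sup' (fun i => |hB.eigenvalues i|) (Finset.mem_univ (Sum.inl ⟨0, hk⟩))
    nlinarith
  have hU : ∀ i, Integrable (fun ω => U₁ ω i * U₁ ω i) μ := fun i => hU2 i i
  have hUU : ∫ ω, U₁ ω ⬝ᵥ U₁ ω ∂μ = A.trace :=
    integral_dotProduct_self_eq_trace hU fun i => hUcov i i
  have htr : 0 ≤ A.trace := hUU ▸ integral_nonneg fun ω => dotProduct_self_nonneg _
  have hc : 0 < α ^ 2 * ψ₁ := by positivity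
  calc _ ≤ ENNReal.ofReal (α ^ 2 * ψ₁ / 2)
          * ∫⁻ ω, ENNReal.ofReal ((Z ω ⬝ᵥ (Pᵀ * P) *ᵥ Z ω)⁻¹) ∂μ
        + ENNReal.ofReal (∫ ω, U₁ ω ⬝ᵥ U₁ ω / (2 * (α ^ 2 * ψ₁)) ∂μ) := by
        refine lintegral_ofReal_le_mul_lintegral_add_integral (by positivity)
          ((integrable_dotProduct_self hU).div_const _)
          (ae_of_all _ fun ω => div_nonneg (dotProduct_self_nonneg _) (by positivity))
          (ae_of_all _ fun ω => ?_)
        rw [dotProduct_transpose_mul_self_mulVec]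
        exact abs_dotProduct_div_dotProduct_self_le _ _ hc
    _ ≤ _ := by
        gcongr
        rw [integral_div, hUU, div_le_div_iff₀ (by positivity) (by positivity)]
        have := mul_le_mul_of_nonneg_left hψ₀₁ (mul_nonneg htr (sq_nonneg α))
        nlinarith [dotProduct_self_nonneg m, Nat.cast_nonneg (α := ℝ) k, sq_nonneg (α * ψ₁)]

/-- With `Z` of mean `m` and covariance `I_k`, `U₁` of mean `0` and covariance `A`,
`R = P'P` positive definite, `ψ₀ = λ_min(R)` and `ψ₁ = max_i |λ_i(B)|` for
`B = [[0,P'],[P,0]]`, the quantity `η‡ = E[|U₁'PZ| / (Z'RZ)]` satisfies, for every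
`α > 0`, `η‡ ≤ (α²ψ₁/2)·ω + ψ₁·(tr(A)+k+m'm)/(α²ψ₀)`, where `ω = E[1/(Z'RZ)]`
(assumed finite). -/
theorem eta_ddag_bound
    {Ω : Type*} [MeasurableSpace Ω] (μ : Measure Ω) [IsProbabilityMeasure μ]
    (k : ℕ) (hk : 0 < k) (P : Matrix (Fin k) (Fin k) ℝ) (hP : IsUnit P)
    (hR : (Pᵀ * P).PosDef)
    (hB : (Matrix.fromBlocks (0 : Matrix (Fin k) (Fin k) ℝ) Pᵀ P 0).IsHermitian)
    (A : Matrix (Fin k) (Fin k) ℝ)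
    (Z U₁ : Ω → Fin k → ℝ) (hZ : AEMeasurable Z μ) (hU : AEMeasurable U₁ μ)
    (m : Fin k → ℝ)
    (hZ1 : ∀ i, Integrable (fun ω => Z ω i) μ)
    (hZ2 : ∀ i j, Integrable (fun ω => Z ω i * Z ω j) μ)
    (hU1 : ∀ i, Integrable (fun ω => U₁ ω i) μ)
    (hU2 : ∀ i j, Integrable (fun ω => U₁ ω i * U₁ ω j) μ)
    (hZmean : ∀ i, ∫ ω, Z ω i ∂μ = m i)
    (hZcov : ∀ i j, ∫ ω, (Z ω i - m i) * (Z ω j - m j) ∂μ = if i = j then 1 else 0)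
    (hUmean : ∀ i, ∫ ω, U₁ ω i ∂μ = 0)
    (hUcov : ∀ i j, ∫ ω, U₁ ω i * U₁ ω j ∂μ = A i j)
    (hω : ∫⁻ ω, ENNReal.ofReal ((Z ω ⬝ᵥ (Pᵀ * P).mulVec (Z ω))⁻¹) ∂μ ≠ ⊤)
    (α : ℝ) (hα : 0 < α) :
    ∫⁻ ω, ENNReal.ofReal (|U₁ ω ⬝ᵥ P.mulVec (Z ω)| / (Z ω ⬝ᵥ (Pᵀ * P).mulVec (Z ω))) ∂μ
      ≤ ENNReal.ofReal (α ^ 2 *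
            (Finset.univ.sup' ⟨Sum.inl ⟨0, hk⟩, Finset.mem_univ _⟩
              fun i => |hB.eigenvalues i|) / 2)
          * ∫⁻ ω, ENNReal.ofReal ((Z ω ⬝ᵥ (Pᵀ * P).mulVec (Z ω))⁻¹) ∂μ
        + ENNReal.ofReal
          ((Finset.univ.sup' ⟨Sum.inl ⟨0, hk⟩, Finset.mem_univ _⟩
              fun i => |hB.eigenvalues i|)
            * (A.trace + k + m ⬝ᵥ m)
            / (α ^ 2 *
                (Finset.univ.inf' ⟨⟨0, hk⟩, Finset.mem_univ _⟩
                  fun i => hR.1.eigenvalues i))) :=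
  eta_ddag_bound_general μ k hk P hR hB A Z U₁ m hU2 hUcov α hα
end

section
/- Let X have density f_X(x) = ∫₀^∞ φ_{μ, z⁻¹Σ}(x) κ(z) dz where φ_{μ,Σ} is the N_k(μ,Σ) density, Σ = I_k, k ≥ 3, and κ is a weighting function with 0 < ∫₀^∞ t|κ(t)| dt < ∞. Then E[1/(X'X)] is finite; more precisely |E[1/(X'X)]| ≤ (1/(k−2))·∫₀^∞ t|κ(t)| dt. -/
open Matrix MeasureTheory ProbabilityTheory

/-! For `c > 0`, `c⁻¹ = ∫₀^∞ exp(-s c) ds`. Completing the square, `exp(-s y²)` times the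
`N(μ, v)` density is at most `(1 + 2vs)^(-1/2)` times an `N(μ/(1+2vs), v/(1+2vs))` density, so by
Tonelli the `N_k(m, v I)` expectation of `1/(x ⬝ᵥ x)` is at most
`∫₀^∞ (1 + 2vs)^(-k/2) ds = 1/(v(k-2))`. For the mixture, `v = t⁻¹` and a second use of Tonelli,
now in `(x, t)`, gives `∫ |f x| / (x ⬝ᵥ x) dx ≤ (k-2)⁻¹ ∫₀^∞ t |κ t| dt`. -/

open Real Set Filter Topology
open scoped NNReal ENNReal

-- Since `0⁻¹ = 0`, this holds for every `c`; so `x ⬝ᵥ x = 0` needs no null-set argument.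
lemma ofReal_inv_le_lintegral_Ioi_exp_neg_mul (c : ℝ) :
    ENNReal.ofReal c⁻¹ ≤ ∫⁻ s in Ioi 0, ENNReal.ofReal (rexp (-(s * c))) := by
  rcases le_or_gt c 0 with hc | hc
  · simp [ENNReal.ofReal_of_nonpos (inv_nonpos.2 hc)]
  have hexp : ∀ s, -(s * c) = -c * s := fun s => by ring
  simp_rw [hexp]
  rw [← ofReal_integral_eq_lintegral_ofReal (exp_neg_integrableOn_Ioi 0 hc)
    (ae_of_all _ fun s => (Real.exp_pos _).le), integral_exp_mul_Ioi (neg_lt_zero.2 hc)]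
  simp

lemma lintegral_Ioi_one_add_mul_rpow_neg {a p : ℝ} (ha : 0 < a) (hp : 1 < p) :
    ∫⁻ s in Ioi 0, ENNReal.ofReal ((1 + a * s) ^ (-p)) = ENNReal.ofReal (a * (p - 1))⁻¹ := by
  set g : ℝ → ℝ := fun s => -(1 + a * s) ^ (1 - p) / (a * (p - 1))
  have hderiv : ∀ s ∈ Ici (0 : ℝ), HasDerivAt g ((1 + a * s) ^ (-p)) s := by
    intro s hs
    have hpos : 0 < 1 + a * s := by have : (0 : ℝ) ≤ s := hs; positivity
    have := ((((hasDerivAt_id s).const_mul a).const_add 1).rpow_const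
      (p := 1 - p) (Or.inl hpos.ne')).neg.div_const (a * (p - 1))
    refine this.congr_deriv ?_
    have hp1 : p - 1 ≠ 0 := by linarith
    simp only [id, show 1 - p - 1 = -p by ring]
    field_simp
    ring
  have hnonneg : ∀ s ∈ Ioi (0 : ℝ), 0 ≤ (1 + a * s) ^ (-p) := fun s hs => by
    have : (0 : ℝ) < s := hs; positivity
  have hlim : Tendsto g atTop (𝓝 0) := by
    have hbase : Tendsto (fun s : ℝ => 1 + a * s) atTop atTop :=
      tendsto_atTop_add_const_left _ 1 (tendsto_id.const_mul_atTop ha)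
    simpa [g] using (((tendsto_rpow_neg_atTop (y := p - 1) (by linarith)).comp hbase).neg.div_const
      (a * (p - 1)))
  rw [← ofReal_integral_eq_lintegral_ofReal (integrableOn_Ioi_deriv_of_nonneg' hderiv hnonneg hlim)
    (ae_restrict_of_forall_mem measurableSet_Ioi hnonneg),
    integral_Ioi_of_hasDerivAt_of_nonneg' hderiv hnonneg hlim]
  simp only [g, mul_zero, add_zero, Real.one_rpow, zero_sub, neg_div, neg_neg, one_div]

lemma exp_neg_mul_sq_mul_gaussianPDFReal (μ : ℝ) {v : ℝ≥0} (hv : v ≠ 0) {s : ℝ} (hs : 0 ≤ s)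
    (y : ℝ) :
    rexp (-(s * y ^ 2)) * gaussianPDFReal μ v y =
      (1 + 2 * v * s) ^ (-(1 / 2 : ℝ)) * rexp (-(s * μ ^ 2 / (1 + 2 * v * s))) *
        gaussianPDFReal (μ / (1 + 2 * v * s)) (v / (1 + 2 * v * s)).toNNReal y := by
  have hv' : (0 : ℝ) < v := by positivity
  have hc : 0 < 1 + 2 * (v : ℝ) * s := by positivity
  have hexp : -(s * y ^ 2) + -(y - μ) ^ 2 / (2 * v) =
      -(s * μ ^ 2 / (1 + 2 * v * s)) +
        -(y - μ / (1 + 2 * v * s)) ^ 2 / (2 * (v / (1 + 2 * v * s))) := by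
    field_simp
    ring
  rw [gaussianPDFReal, gaussianPDFReal, Real.coe_toNNReal _ (by positivity),
    Real.rpow_neg hc.le, ← Real.sqrt_eq_rpow, mul_div_assoc', Real.sqrt_div' _ hc.le,
    mul_left_comm, ← Real.exp_add, hexp, Real.exp_add]
  field_simp

section GaussianProduct

variable {ι : Type*} [Fintype ι]

lemma lintegral_exp_neg_mul_dotProduct_mul_prod_gaussianPDFReal_le
    (m : ι → ℝ) {v : ℝ≥0} (hv : v ≠ 0) {s : ℝ} (hs : 0 ≤ s) :
    ∫⁻ x : ι → ℝ, ENNReal.ofReal (rexp (-(s * (x ⬝ᵥ x))) * ∏ i, gaussianPDFReal (m i) v (x i))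
      ≤ ENNReal.ofReal ((1 + 2 * v * s) ^ (-(Fintype.card ι / 2 : ℝ))) := by
  set c : ℝ := 1 + 2 * v * s
  have hc : 0 < c := by positivity
  set v' : ℝ≥0 := (v / c).toNNReal
  have hv' : v' ≠ 0 := by simp [v', hc, pos_iff_ne_zero.2 hv]
  set g : (ι → ℝ) → ℝ := fun x => c ^ (-(Fintype.card ι / 2 : ℝ)) *
    ∏ i, gaussianPDFReal (m i / c) v' (x i)
  have hle : ∀ x : ι → ℝ,
      rexp (-(s * (x ⬝ᵥ x))) * ∏ i, gaussianPDFReal (m i) v (x i) ≤ g x := by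
    intro x
    calc rexp (-(s * (x ⬝ᵥ x))) * ∏ i, gaussianPDFReal (m i) v (x i)
        = ∏ i, rexp (-(s * x i ^ 2)) * gaussianPDFReal (m i) v (x i) := by
          simp only [Finset.prod_mul_distrib, ← Real.exp_sum, dotProduct, Finset.mul_sum,
            Finset.sum_neg_distrib, sq]
      _ = ∏ i, c ^ (-(1 / 2 : ℝ)) * rexp (-(s * m i ^ 2 / c)) *
            gaussianPDFReal (m i / c) v' (x i) :=
          Finset.prod_congr rfl fun i _ => exp_neg_mul_sq_mul_gaussianPDFReal _ hv hs _
      _ ≤ ∏ i, c ^ (-(1 / 2 : ℝ)) * gaussianPDFReal (m i / c) v' (x i) := by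
          refine Finset.prod_le_prod (fun i _ => ?_) fun i _ => ?_
          · have := gaussianPDFReal_nonneg (m i / c) v' (x i)
            positivity
          · gcongr
            · exact gaussianPDFReal_nonneg _ _ _
            refine mul_le_of_le_one_right (by positivity) (Real.exp_le_one_iff.2 ?_)
            have : 0 ≤ s * m i ^ 2 / c := by positivity
            linarith
      _ = g x := by
          rw [Finset.prod_mul_distrib, Finset.prod_const, ← Real.rpow_mul_natCast hc.le,
            Finset.card_univ, show -(1 / 2 : ℝ) * Fintype.card ι = -(Fintype.card ι / 2) by ring]
  have hg_nonneg : ∀ x, 0 ≤ g x := fun x =>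
    mul_nonneg (by positivity) (Finset.prod_nonneg fun i _ => gaussianPDFReal_nonneg _ _ _)
  have hg : Integrable g := (Integrable.fintype_prod fun i =>
    integrable_gaussianPDFReal (m i / c) v').const_mul _
  have hg_int : ∫ x, g x = c ^ (-(Fintype.card ι / 2 : ℝ)) := by
    simp [g, integral_const_mul, integral_fintype_prod_volume_eq_prod,
      integral_gaussianPDFReal_eq_one _ hv']
  calc _ ≤ ∫⁻ x, ENNReal.ofReal (g x) := lintegral_mono fun x => ENNReal.ofReal_le_ofReal (hle x)
    _ = _ := by rw [← ofReal_integral_eq_lintegral_ofReal hg (ae_of_all _ hg_nonneg), hg_int]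

lemma lintegral_inv_dotProduct_mul_prod_gaussianPDFReal_le
    (hι : 2 < Fintype.card ι) (m : ι → ℝ) {v : ℝ≥0} (hv : v ≠ 0) :
    ∫⁻ x : ι → ℝ, ENNReal.ofReal ((x ⬝ᵥ x)⁻¹ * ∏ i, gaussianPDFReal (m i) v (x i))
      ≤ ENNReal.ofReal (v * (Fintype.card ι - 2))⁻¹ := by
  set G : (ι → ℝ) → ℝ := fun x => ∏ i, gaussianPDFReal (m i) v (x i)
  have hG : ∀ x, 0 ≤ G x := fun x => Finset.prod_nonneg fun i _ => gaussianPDFReal_nonneg _ _ _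
  have hι' : (2 : ℝ) < Fintype.card ι := by exact_mod_cast hι
  calc ∫⁻ x, ENNReal.ofReal ((x ⬝ᵥ x)⁻¹ * G x)
      ≤ ∫⁻ x, ∫⁻ s in Ioi 0, ENNReal.ofReal (rexp (-(s * (x ⬝ᵥ x))) * G x) := by
        refine lintegral_mono fun x => ?_
        simp only [ENNReal.ofReal_mul' (hG x)]
        rw [lintegral_mul_const' _ _ ENNReal.ofReal_ne_top]
        gcongr
        exact ofReal_inv_le_lintegral_Ioi_exp_neg_mul _
    _ = ∫⁻ s in Ioi 0, ∫⁻ x, ENNReal.ofReal (rexp (-(s * (x ⬝ᵥ x))) * G x) :=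
        lintegral_lintegral_swap (by fun_prop)
    _ ≤ ∫⁻ s in Ioi 0, ENNReal.ofReal ((1 + 2 * v * s) ^ (-(Fintype.card ι / 2 : ℝ))) :=
        setLIntegral_mono' measurableSet_Ioi fun s hs =>
          lintegral_exp_neg_mul_dotProduct_mul_prod_gaussianPDFReal_le m hv (le_of_lt hs)
    _ = ENNReal.ofReal (v * (Fintype.card ι - 2))⁻¹ := by
        rw [lintegral_Ioi_one_add_mul_rpow_neg (by positivity) (by linarith)]
        ring_nf

lemma lintegral_enorm_inv_dotProduct_mul_prod_gaussianPDFReal_mul_le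
    (hι : 2 < Fintype.card ι) (m : ι → ℝ) {t : ℝ} (ht : 0 < t) (a : ℝ) :
    ∫⁻ x : ι → ℝ, ‖(x ⬝ᵥ x)⁻¹ * ((∏ i, gaussianPDFReal (m i) t⁻¹.toNNReal (x i)) * a)‖ₑ
      ≤ ENNReal.ofReal (1 / (Fintype.card ι - 2)) * ENNReal.ofReal (t * |a|) := by
  have hι' : (2 : ℝ) < Fintype.card ι := by exact_mod_cast hι
  have hnonneg : ∀ x : ι → ℝ,
      0 ≤ (x ⬝ᵥ x)⁻¹ * ∏ i, gaussianPDFReal (m i) t⁻¹.toNNReal (x i) := fun x =>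
    mul_nonneg (inv_nonneg.2 (dotProduct_self_star_nonneg x))
      (Finset.prod_nonneg fun i _ => gaussianPDFReal_nonneg _ _ _)
  simp only [← mul_assoc, enorm_mul, Real.enorm_of_nonneg (hnonneg _), Real.enorm_eq_ofReal_abs]
  rw [lintegral_mul_const' _ _ ENNReal.ofReal_ne_top]
  calc _ ≤ ENNReal.ofReal ((t⁻¹ : ℝ) * (Fintype.card ι - 2))⁻¹ * ENNReal.ofReal |a| := by
        gcongr
        simpa [Real.coe_toNNReal _ (inv_nonneg.2 ht.le)] using
          lintegral_inv_dotProduct_mul_prod_gaussianPDFReal_le hι m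
            (v := t⁻¹.toNNReal) (by simpa using ht)
    _ = _ := by
        rw [show ((t⁻¹ : ℝ) * (Fintype.card ι - 2))⁻¹ = 1 / (Fintype.card ι - 2) * t by
            field_simp,
          ENNReal.ofReal_mul (one_div_nonneg.2 (by linarith)), mul_assoc,
          ← ENNReal.ofReal_mul ht.le]

end GaussianProduct

lemma lintegral_enorm_integral_le_lintegral_lintegral_enorm {α β E : Type*}
    [MeasurableSpace α] [MeasurableSpace β] [NormedAddCommGroup E] [NormedSpace ℝ E]
    {μ : Measure α} {ν : Measure β} [SFinite μ] [SFinite ν] {g : α → β → E}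
    (hg : AEStronglyMeasurable (Function.uncurry g) (μ.prod ν)) :
    ∫⁻ x, ‖∫ t, g x t ∂ν‖ₑ ∂μ ≤ ∫⁻ t, ∫⁻ x, ‖g x t‖ₑ ∂μ ∂ν :=
  (lintegral_mono fun _ => enorm_integral_le_lintegral_enorm _).trans_eq
    (lintegral_lintegral_swap hg.enorm)

lemma abs_integral_le_of_lintegral_enorm_le {α : Type*} [MeasurableSpace α] {μ : Measure α}
    {f : α → ℝ} {C : ℝ} (hC : 0 ≤ C) (h : ∫⁻ x, ‖f x‖ₑ ∂μ ≤ ENNReal.ofReal C) :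
    |∫ x, f x ∂μ| ≤ C := by
  rw [← ENNReal.ofReal_le_ofReal_iff hC, ← Real.enorm_eq_ofReal_abs]
  exact (enorm_integral_le_lintegral_enorm f).trans h

theorem elliptical_inv_norm_sq_moment_general
    (k : ℕ) (hk : 3 ≤ k) (m : Fin k → ℝ) (κ : ℝ → ℝ) (hκmeas : Measurable κ)
    (hκint : IntegrableOn (fun t => t * |κ t|) (Set.Ioi (0 : ℝ)))
    (f : (Fin k → ℝ) → ℝ)
    (hf : ∀ x, f x = ∫ t in Set.Ioi (0 : ℝ),
        (∏ i, gaussianPDFReal (m i) (Real.toNNReal t⁻¹) (x i)) * κ t) :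
    Integrable (fun x => (x ⬝ᵥ x)⁻¹ * f x) volume ∧
      |∫ x, (x ⬝ᵥ x)⁻¹ * f x|
        ≤ (1 / ((k : ℝ) - 2)) * ∫ t in Set.Ioi (0 : ℝ), t * |κ t| := by
  set G : (Fin k → ℝ) → ℝ → ℝ := fun x t =>
    (x ⬝ᵥ x)⁻¹ * ((∏ i, gaussianPDFReal (m i) t⁻¹.toNNReal (x i)) * κ t)
  have hG : Measurable (Function.uncurry G) := by fun_prop
  have hF : ∀ x, (x ⬝ᵥ x)⁻¹ * f x = ∫ t in Ioi 0, G x t := fun x => by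
    rw [hf, integral_const_mul]
  have hk3 : (3 : ℝ) ≤ k := by exact_mod_cast hk
  have hk2 : 0 ≤ 1 / ((k : ℝ) - 2) := one_div_nonneg.2 (by linarith)
  have htκ : ∀ t ∈ Ioi (0 : ℝ), 0 ≤ t * |κ t| := fun t ht => mul_nonneg ht.le (abs_nonneg _)
  have hbound : ∫⁻ x, ‖(x ⬝ᵥ x)⁻¹ * f x‖ₑ
      ≤ ENNReal.ofReal (1 / (k - 2) * ∫ t in Ioi 0, t * |κ t|) := by
    simp only [hF]
    calc _ ≤ ∫⁻ t in Ioi 0, ∫⁻ x, ‖G x t‖ₑ :=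
          lintegral_enorm_integral_le_lintegral_lintegral_enorm hG.aestronglyMeasurable
      _ ≤ ∫⁻ t in Ioi 0, ENNReal.ofReal (1 / (k - 2)) * ENNReal.ofReal (t * |κ t|) :=
          setLIntegral_mono' measurableSet_Ioi fun t ht => by
            simpa only [Fintype.card_fin] using
              lintegral_enorm_inv_dotProduct_mul_prod_gaussianPDFReal_mul_le
                (by rw [Fintype.card_fin]; omega) m ht (κ t)
      _ = _ := by
          rw [lintegral_const_mul' _ _ ENNReal.ofReal_ne_top,
            ← ofReal_integral_eq_lintegral_ofReal hκint
              (ae_restrict_of_forall_mem measurableSet_Ioi htκ), ← ENNReal.ofReal_mul hk2]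
  have hmeas : AEStronglyMeasurable (fun x => (x ⬝ᵥ x)⁻¹ * f x) := by
    simp only [hF]
    exact hG.stronglyMeasurable.integral_prod_right'.aestronglyMeasurable
  exact ⟨⟨hmeas, hbound.trans_lt ENNReal.ofReal_lt_top⟩, abs_integral_le_of_lintegral_enorm_le
    (mul_nonneg hk2 (setIntegral_nonneg measurableSet_Ioi htκ)) hbound⟩

/-- Let `X` have density `f(x) = ∫₀^∞ φ_{m, t⁻¹I_k}(x) κ(t) dt` on `ℝ^k` (a scale
mixture of `N_k(m, t⁻¹I_k)` Gaussian densities), with `k ≥ 3` and a weighting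
function `κ` satisfying `0 < ∫₀^∞ t|κ(t)| dt < ∞`. Then `E[1/(X'X)]` is finite and
`|E[1/(X'X)]| ≤ (1/(k−2)) · ∫₀^∞ t|κ(t)| dt`. -/
theorem elliptical_inv_norm_sq_moment
    (k : ℕ) (hk : 3 ≤ k) (m : Fin k → ℝ) (κ : ℝ → ℝ) (hκmeas : Measurable κ)
    (hκint : IntegrableOn (fun t => t * |κ t|) (Set.Ioi (0 : ℝ)))
    (hκpos : 0 < ∫ t in Set.Ioi (0 : ℝ), t * |κ t|)
    (f : (Fin k → ℝ) → ℝ)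
    (hf : ∀ x, f x = ∫ t in Set.Ioi (0 : ℝ),
        (∏ i, gaussianPDFReal (m i) (Real.toNNReal t⁻¹) (x i)) * κ t) :
    Integrable (fun x => (x ⬝ᵥ x)⁻¹ * f x) volume ∧
      |∫ x, (x ⬝ᵥ x)⁻¹ * f x|
        ≤ (1 / ((k : ℝ) - 2)) * ∫ t in Set.Ioi (0 : ℝ), t * |κ t| :=
  elliptical_inv_norm_sq_moment_general k hk m κ hκmeas hκint f hf
end

section
/- Suppose |h(x,y)| ≤ q₀/||x−y||², h(x,y) depends only on x−y, β̃−β and β̂−β̃ are independent random vectors with E[β̃−β] = γ, and ω(h) := E[h(β̂,β̃)²||β̂−β̃||²] < ∞. Then |η(h)| := |E[h(β̂,β̃)(β̂−β)'(β̂−β̃)]| ≤ q₀ + ||γ||·ω(h)^{1/2}; in particular η(h) is finite. -/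
/-!
Put `X = β̂ - β̃`, `Y = β̃ - β` and `f = g(X) • X`, so that the integrand of `η(h)` is
`X ⬝ᵥ f + Y ⬝ᵥ f`. The first term is `g(X) ‖X‖²`, bounded by `q₀` by (H₁). Since `f` is a
function of `X` alone (H₂), independence gives `E[Y ⬝ᵥ f] = γ ⬝ᵥ E[f]`, and Cauchy–Schwarz
together with Jensen's `‖E[f]‖² ≤ E[‖f‖²] = ω(h)` bounds it by `‖γ‖ ω(h)^{1/2}`.
-/

open Matrix MeasureTheory ProbabilityTheory

section DotProduct

variable {ι : Type*} [Fintype ι]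

lemma sq_apply_le_dotProduct_self (v : ι → ℝ) (i : ι) : v i ^ 2 ≤ v ⬝ᵥ v := by
  rw [sq]
  exact Finset.single_le_sum (f := fun j => v j * v j) (fun j _ => mul_self_nonneg (v j))
    (Finset.mem_univ i)

lemma abs_dotProduct_le_sqrt_mul_sqrt (v w : ι → ℝ) :
    |v ⬝ᵥ w| ≤ √(v ⬝ᵥ v) * √(w ⬝ᵥ w) := by
  rw [← Real.sqrt_mul (by simpa using dotProduct_star_self_nonneg v)]
  exact Real.abs_le_sqrt (by simpa [dotProduct, sq] using Finset.sum_mul_sq_le_sq_mul_sq _ v w)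

lemma abs_dotProduct_smul_self_le {v : ι → ℝ} (hv : v ≠ 0) {c q : ℝ}
    (hc : |c| ≤ q / (v ⬝ᵥ v)) : |v ⬝ᵥ c • v| ≤ q := by
  have hpos : 0 < v ⬝ᵥ v := by
    simpa only [star_trivial] using dotProduct_star_self_pos_iff.2 hv
  rwa [dotProduct_smul, smul_eq_mul, abs_mul, abs_of_pos hpos, ← le_div_iff₀ hpos]

end DotProduct

namespace ProbabilityTheory

variable {Ω ι : Type*} [MeasurableSpace Ω] {μ : Measure Ω}

lemma IndepFun.integrable_apply_mul_apply {Y Z : Ω → ι → ℝ} (hYZ : IndepFun Y Z μ)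
    {i : ι} (hY : Integrable (fun ω => Y ω i) μ) (hZ : Integrable (fun ω => Z ω i) μ) :
    Integrable (fun ω => Y ω i * Z ω i) μ :=
  (hYZ.comp (measurable_pi_apply i) (measurable_pi_apply i)).integrable_mul hY hZ

variable [Fintype ι]

lemma sq_integral_le_integral_sq [IsProbabilityMeasure μ] {X : Ω → ℝ} (hX : MemLp X 2 μ) :
    (∫ ω, X ω ∂μ) ^ 2 ≤ ∫ ω, X ω ^ 2 ∂μ := by
  have hvar := variance_nonneg X μ
  rw [variance_eq_sub hX] at hvar
  simpa using sub_nonneg.mp hvar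

lemma memLp_two_apply_of_integrable_dotProduct_self {f : Ω → ι → ℝ}
    (hf : AEStronglyMeasurable f μ) (hint : Integrable (fun ω => f ω ⬝ᵥ f ω) μ) (i : ι) :
    MemLp (fun ω => f ω i) 2 μ := by
  have hfi : AEStronglyMeasurable (fun ω => f ω i) μ :=
    (continuous_apply i).comp_aestronglyMeasurable hf
  refine (memLp_two_iff_integrable_sq hfi).2 (hint.mono' (hfi.pow 2) (.of_forall fun ω => ?_))
  rw [Real.norm_of_nonneg (sq_nonneg _)]
  exact sq_apply_le_dotProduct_self (f ω) i

lemma dotProduct_self_integral_le [IsProbabilityMeasure μ] {f : Ω → ι → ℝ}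
    (hf : AEStronglyMeasurable f μ) (hint : Integrable (fun ω => f ω ⬝ᵥ f ω) μ) :
    (fun i => ∫ ω, f ω i ∂μ) ⬝ᵥ (fun i => ∫ ω, f ω i ∂μ) ≤ ∫ ω, f ω ⬝ᵥ f ω ∂μ := by
  have hf2 i := memLp_two_apply_of_integrable_dotProduct_self hf hint i
  calc (fun i => ∫ ω, f ω i ∂μ) ⬝ᵥ (fun i => ∫ ω, f ω i ∂μ)
      = ∑ i, (∫ ω, f ω i ∂μ) ^ 2 := by simp only [dotProduct, sq]
    _ ≤ ∑ i, ∫ ω, f ω i ^ 2 ∂μ :=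
      Finset.sum_le_sum fun i _ => sq_integral_le_integral_sq (hf2 i)
    _ = ∫ ω, f ω ⬝ᵥ f ω ∂μ := by
      rw [← integral_finsetSum _ fun i _ => (hf2 i).integrable_sq]
      simp only [dotProduct, sq]

lemma IndepFun.integrable_dotProduct {Y Z : Ω → ι → ℝ} (hYZ : IndepFun Y Z μ)
    (hY : ∀ i, Integrable (fun ω => Y ω i) μ) (hZ : ∀ i, Integrable (fun ω => Z ω i) μ) :
    Integrable (fun ω => Y ω ⬝ᵥ Z ω) μ :=
  integrable_finsetSum _ fun _ _ => hYZ.integrable_apply_mul_apply (hY _) (hZ _)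

lemma IndepFun.integral_dotProduct {Y Z : Ω → ι → ℝ} (hYZ : IndepFun Y Z μ)
    (hY : ∀ i, Integrable (fun ω => Y ω i) μ) (hZ : ∀ i, Integrable (fun ω => Z ω i) μ) :
    ∫ ω, Y ω ⬝ᵥ Z ω ∂μ = (fun i => ∫ ω, Y ω i ∂μ) ⬝ᵥ (fun i => ∫ ω, Z ω i ∂μ) := by
  simp only [dotProduct]
  rw [integral_finsetSum _ fun _ _ => hYZ.integrable_apply_mul_apply (hY _) (hZ _)]
  exact Finset.sum_congr rfl fun i _ =>
    (hYZ.comp (measurable_pi_apply i) (measurable_pi_apply i)).integral_fun_mul_eq_mul_integral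
      (hY i).1 (hZ i).1

lemma IndepFun.abs_integral_dotProduct_le [IsProbabilityMeasure μ]
    {Y Z : Ω → ι → ℝ} (hYZ : IndepFun Y Z μ) (hY : ∀ i, Integrable (fun ω => Y ω i) μ)
    (hZ : AEStronglyMeasurable Z μ) (hZZ : Integrable (fun ω => Z ω ⬝ᵥ Z ω) μ) :
    |∫ ω, Y ω ⬝ᵥ Z ω ∂μ|
      ≤ √((fun i => ∫ ω, Y ω i ∂μ) ⬝ᵥ (fun i => ∫ ω, Y ω i ∂μ)) * √(∫ ω, Z ω ⬝ᵥ Z ω ∂μ) := by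
  rw [hYZ.integral_dotProduct hY fun i =>
    (memLp_two_apply_of_integrable_dotProduct_self hZ hZZ i).integrable one_le_two]
  grw [abs_dotProduct_le_sqrt_mul_sqrt, dotProduct_self_integral_le hZ hZZ]

end ProbabilityTheory

theorem eta_h_bound_general
    {Ω : Type*} [MeasurableSpace Ω] (μ : Measure Ω) [IsProbabilityMeasure μ]
    (k : ℕ) (h : (Fin k → ℝ) → (Fin k → ℝ) → ℝ) (g : (Fin k → ℝ) → ℝ)
    (hgmeas : Measurable g) (hH2 : ∀ x y, h x y = g (x - y))
    (q₀ : ℝ)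
    (hH1 : ∀ x y : Fin k → ℝ, x ≠ y → |h x y| ≤ q₀ / ((x - y) ⬝ᵥ (x - y)))
    (betaHat betaTilde : Ω → Fin k → ℝ) (β γ : Fin k → ℝ)
    (hb1 : AEMeasurable betaHat μ) (hb2 : AEMeasurable betaTilde μ)
    (hne : ∀ᵐ ω ∂μ, betaHat ω ≠ betaTilde ω)
    (hindep : IndepFun (fun ω => betaTilde ω - β) (fun ω => betaHat ω - betaTilde ω) μ)
    (hmeanint : ∀ i, Integrable (fun ω => betaTilde ω i - β i) μ)
    (hmean : ∀ i, ∫ ω, (betaTilde ω i - β i) ∂μ = γ i)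
    (hωint : Integrable (fun ω => (h (betaHat ω) (betaTilde ω)) ^ 2
      * ((betaHat ω - betaTilde ω) ⬝ᵥ (betaHat ω - betaTilde ω))) μ) :
    Integrable (fun ω => h (betaHat ω) (betaTilde ω)
        * ((betaHat ω - β) ⬝ᵥ (betaHat ω - betaTilde ω))) μ ∧
      |∫ ω, h (betaHat ω) (betaTilde ω)
          * ((betaHat ω - β) ⬝ᵥ (betaHat ω - betaTilde ω)) ∂μ|
        ≤ q₀ + Real.sqrt (γ ⬝ᵥ γ) *
            Real.sqrt (∫ ω, (h (betaHat ω) (betaTilde ω)) ^ 2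
              * ((betaHat ω - betaTilde ω) ⬝ᵥ (betaHat ω - betaTilde ω)) ∂μ) := by
  simp only [hH2] at hH1 hωint ⊢
  set X := fun ω => betaHat ω - betaTilde ω
  set f : Ω → Fin k → ℝ := fun ω => g (X ω) • X ω
  have hX : AEMeasurable X μ := hb1.sub hb2
  have hf : AEStronglyMeasurable f μ :=
    ((hgmeas.comp_aemeasurable hX).smul hX).aestronglyMeasurable
  have hff : ∀ ω, f ω ⬝ᵥ f ω = g (X ω) ^ 2 * (X ω ⬝ᵥ X ω) := fun ω => by
    simp only [f, smul_dotProduct, dotProduct_smul, smul_eq_mul]; ring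
  have hsplit : ∀ ω, g (X ω) * ((betaHat ω - β) ⬝ᵥ X ω)
      = X ω ⬝ᵥ f ω + (betaTilde ω - β) ⬝ᵥ f ω := fun ω => by
    rw [← add_dotProduct, sub_add_sub_cancel, dotProduct_smul, smul_eq_mul]
  have hself : ∀ᵐ ω ∂μ, ‖X ω ⬝ᵥ f ω‖ ≤ q₀ := by
    filter_upwards [hne] with ω hω
    exact abs_dotProduct_smul_self_le (sub_ne_zero.2 hω) (hH1 _ _ hω)
  have hself_int : Integrable (fun ω => X ω ⬝ᵥ f ω) μ :=
    (integrable_const q₀).mono' ((continuous_fst.dotProduct continuous_snd)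
      |>.comp_aestronglyMeasurable (hX.aestronglyMeasurable.prodMk hf)) hself
  have hff_int : Integrable (fun ω => f ω ⬝ᵥ f ω) μ := by simpa only [hff] using hωint
  have hindep_f : IndepFun (fun ω => betaTilde ω - β) f μ :=
    hindep.comp measurable_id (hgmeas.smul measurable_id)
  have hcross_int := hindep_f.integrable_dotProduct hmeanint fun i =>
    (memLp_two_apply_of_integrable_dotProduct_self hf hff_int i).integrable one_le_two
  have hcross := hindep_f.abs_integral_dotProduct_le hmeanint hf hff_int
  rw [show (fun i => ∫ ω, (betaTilde ω - β) i ∂μ) = γ from funext hmean,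
    integral_congr_ae (.of_forall hff)] at hcross
  refine ⟨(hself_int.add hcross_int).congr (.of_forall fun ω => (hsplit ω).symm), ?_⟩
  rw [integral_congr_ae (.of_forall hsplit), integral_add hself_int hcross_int]
  exact (abs_add_le _ _).trans
    (add_le_add (by simpa using norm_integral_le_of_norm_le_const hself) hcross)

/-- Suppose `|h(x,y)| ≤ q₀/‖x−y‖²`, `h(x,y)` depends only on `x−y`, the random
vectors `β̃−β` and `β̂−β̃` are independent with `E[β̃−β] = γ`, and
`ω(h) := E[h(β̂,β̃)²‖β̂−β̃‖²] < ∞`. Then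
`|η(h)| := |E[h(β̂,β̃)(β̂−β)'(β̂−β̃)]| ≤ q₀ + ‖γ‖·ω(h)^{1/2}`;
in particular `η(h)` is finite. -/
theorem eta_h_bound
    {Ω : Type*} [MeasurableSpace Ω] (μ : Measure Ω) [IsProbabilityMeasure μ]
    (k : ℕ) (h : (Fin k → ℝ) → (Fin k → ℝ) → ℝ) (g : (Fin k → ℝ) → ℝ)
    (hgmeas : Measurable g) (hH2 : ∀ x y, h x y = g (x - y))
    (q₀ : ℝ) (hq₀ : 0 < q₀)
    (hH1 : ∀ x y : Fin k → ℝ, x ≠ y → |h x y| ≤ q₀ / ((x - y) ⬝ᵥ (x - y)))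
    (betaHat betaTilde : Ω → Fin k → ℝ) (β γ : Fin k → ℝ)
    (hb1 : AEMeasurable betaHat μ) (hb2 : AEMeasurable betaTilde μ)
    (hne : ∀ᵐ ω ∂μ, betaHat ω ≠ betaTilde ω)
    (hindep : IndepFun (fun ω => betaTilde ω - β) (fun ω => betaHat ω - betaTilde ω) μ)
    (hmeanint : ∀ i, Integrable (fun ω => betaTilde ω i - β i) μ)
    (hmean : ∀ i, ∫ ω, (betaTilde ω i - β i) ∂μ = γ i)
    (hωint : Integrable (fun ω => (h (betaHat ω) (betaTilde ω)) ^ 2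
      * ((betaHat ω - betaTilde ω) ⬝ᵥ (betaHat ω - betaTilde ω))) μ) :
    Integrable (fun ω => h (betaHat ω) (betaTilde ω)
        * ((betaHat ω - β) ⬝ᵥ (betaHat ω - betaTilde ω))) μ ∧
      |∫ ω, h (betaHat ω) (betaTilde ω)
          * ((betaHat ω - β) ⬝ᵥ (betaHat ω - betaTilde ω)) ∂μ|
        ≤ q₀ + Real.sqrt (γ ⬝ᵥ γ) *
            Real.sqrt (∫ ω, (h (betaHat ω) (betaTilde ω)) ^ 2
              * ((betaHat ω - betaTilde ω) ⬝ᵥ (betaHat ω - betaTilde ω)) ∂μ) :=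
  eta_h_bound_general μ k h g hgmeas hH2 q₀ hH1 betaHat betaTilde β γ hb1 hb2 hne hindep hmeanint
    hmean hωint
end

section
/- Let β̂ = (X'X)⁻¹X'y be the least squares estimator in the model y = Xβ + ε with ε ~ N_n(0, σ²I_n), and let β̃ = β̂ + J(Rβ̂ − r) with J = (X'X)⁻¹R'[R(X'X)⁻¹R']⁻¹ for a full-rank q×k matrix R (q ≤ k) and r ∈ ℝ^q. Then with A = σ²(X'X)⁻¹, Ξ = Cov(β̂−β̃) = JRA, γ = E[β̃−β] = J(Rβ−r), and Λ = A⁻¹, the matrix Λ^{1/2}ΞΛ^{1/2} is idempotent and ΛΞΛγ = Λγ. -/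
/-!
With `P = (X'X)⁻¹R'[R(X'X)⁻¹R']⁻¹` we have `RP = 1`, so `JR = PR` is idempotent and fixes the
range of `P`, which contains `γ`. Since `AΛ = 1`, this gives `ΞΛΞ = Ξ` and `ΛΞΛγ = Λγ`, and the
first identity, conjugated by `Λ^{1/2}`, is the idempotency of `Λ^{1/2}ΞΛ^{1/2}`.
-/

open Matrix

section

open scoped ComplexOrder

/-- `Matrix.PosSemidef.sqrt` as it stood in Mathlib (Dec 2024); removed from Mathlib since. -/
noncomputable def Matrix.PosSemidef.sqrt {n 𝕜 : Type*} [Fintype n] [DecidableEq n] [RCLike 𝕜]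
    {A : Matrix n n 𝕜} (hA : A.PosSemidef) : Matrix n n 𝕜 :=
  hA.1.eigenvectorUnitary.1 * diagonal ((↑) ∘ (√·) ∘ hA.1.eigenvalues) *
  (star hA.1.eigenvectorUnitary : Matrix n n 𝕜)

end

open scoped ComplexOrder in
theorem Matrix.PosSemidef.sqrt_mul_sqrt {n 𝕜 : Type*} [Fintype n] [DecidableEq n] [RCLike 𝕜]
    {A : Matrix n n 𝕜} (hA : A.PosSemidef) : hA.sqrt * hA.sqrt = A := by
  set U : Matrix n n 𝕜 := hA.1.eigenvectorUnitary.1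
  have hU : star U * U = 1 := Unitary.coe_star_mul_self _
  conv_rhs => rw [hA.1.spectral_theorem, Unitary.conjStarAlgAut_apply]
  calc hA.sqrt * hA.sqrt
      = U * (diagonal ((↑) ∘ (√·) ∘ hA.1.eigenvalues) * (star U * U) *
          diagonal ((↑) ∘ (√·) ∘ hA.1.eigenvalues)) * star U := by
        simp only [Matrix.PosSemidef.sqrt, U, Matrix.mul_assoc]
    _ = U * diagonal ((↑) ∘ hA.1.eigenvalues) * star U := by
        rw [hU, Matrix.mul_one, diagonal_mul_diagonal]
        congr 3
        funext i
        simp only [Function.comp_apply, ← RCLike.ofReal_mul,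
          Real.mul_self_sqrt (hA.eigenvalues_nonneg i)]

theorem IsIdempotentElem.mul_mul_of_mul_mul_self_mul {M : Type*} [Semigroup M] {s x : M}
    (h : x * (s * s) * x = x) : IsIdempotentElem (s * x * s) :=
  calc s * x * s * (s * x * s) = s * (x * (s * s) * x) * s := by simp only [mul_assoc]
    _ = s * x * s := by rw [h]

namespace Matrix

variable {m n α : Type*} [Fintype m] [Fintype n] [CommRing α] [DecidableEq m]

/-- The matrix `K⁻¹Rᵀ(RK⁻¹Rᵀ)⁻¹`, the `J` of restricted least squares with `K = XᵀX`. -/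
noncomputable def restrictionGain [DecidableEq n] (K : Matrix n n α) (R : Matrix m n α) :
    Matrix n m α :=
  K⁻¹ * Rᵀ * (R * K⁻¹ * Rᵀ)⁻¹

theorem mul_restrictionGain [DecidableEq n] {K : Matrix n n α} {R : Matrix m n α}
    (h : IsUnit (R * K⁻¹ * Rᵀ)) : R * restrictionGain K R = 1 := by
  rw [restrictionGain, ← Matrix.mul_assoc, ← Matrix.mul_assoc,
    mul_nonsing_inv _ ((isUnit_iff_isUnit_det _).mp h)]

theorem isIdempotentElem_mul_of_mul_eq_one {P : Matrix n m α}
    {R : Matrix m n α} (h : R * P = 1) : IsIdempotentElem (P * R) := by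
  rw [IsIdempotentElem, Matrix.mul_assoc, ← Matrix.mul_assoc R, h, Matrix.one_mul]

theorem mul_mulVec_mulVec_of_mul_eq_one {P : Matrix n m α} {R : Matrix m n α}
    (h : R * P = 1) (v : m → α) : (P * R) *ᵥ (P *ᵥ v) = P *ᵥ v := by
  rw [mulVec_mulVec, Matrix.mul_assoc, h, Matrix.mul_one]

end Matrix

theorem restricted_ls_assumption_H3_general
    (n k q : ℕ) (X : Matrix (Fin n) (Fin k) ℝ)
    (hXXunit : IsUnit (Xᵀ * X))
    (R : Matrix (Fin q) (Fin k) ℝ)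
    (hRunit : IsUnit (R * (Xᵀ * X)⁻¹ * Rᵀ))
    (σ : ℝ) (hσ : 0 < σ) (β : Fin k → ℝ) (r : Fin q → ℝ)
    (A J' Ξ Λ : Matrix (Fin k) (Fin k) ℝ) (γ : Fin k → ℝ)
    (hA : A = σ ^ 2 • (Xᵀ * X)⁻¹)
    (hJ : J' = (Xᵀ * X)⁻¹ * Rᵀ * (R * (Xᵀ * X)⁻¹ * Rᵀ)⁻¹ * R)
    (hΞ : Ξ = J' * A)
    (hγ : γ = ((Xᵀ * X)⁻¹ * Rᵀ * (R * (Xᵀ * X)⁻¹ * Rᵀ)⁻¹).mulVec (R.mulVec β - r))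
    (hΛ : Λ = A⁻¹) (hΛpsd : Λ.PosSemidef) :
    (hΛpsd.sqrt * Ξ * hΛpsd.sqrt) * (hΛpsd.sqrt * Ξ * hΛpsd.sqrt)
        = hΛpsd.sqrt * Ξ * hΛpsd.sqrt ∧
      (Λ * Ξ * Λ).mulVec γ = Λ.mulVec γ := by
  set P := restrictionGain (Xᵀ * X) R
  have hJP : J' = P * R := hJ
  have hRP : R * P = 1 := mul_restrictionGain hRunit
  have hAunit : IsUnit A := hA ▸ (isUnit_nonsing_inv_iff.mpr hXXunit).smul
    (Units.mk0 (σ ^ 2) (pow_ne_zero 2 hσ.ne'))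
  have hAΛ : A * Λ = 1 := hΛ ▸ mul_nonsing_inv A ((isUnit_iff_isUnit_det A).mp hAunit)
  have hJJ : J' * J' = J' := hJP ▸ isIdempotentElem_mul_of_mul_eq_one hRP
  have hΞΛΞ : Ξ * Λ * Ξ = Ξ := by
    rw [hΞ, Matrix.mul_assoc J', Matrix.mul_assoc, hAΛ, Matrix.one_mul, ← Matrix.mul_assoc, hJJ]
  have hΛΞΛ : Λ * Ξ * Λ = Λ * J' := by
    rw [hΞ, Matrix.mul_assoc, Matrix.mul_assoc, hAΛ, Matrix.mul_one]
  have hJγ : J' *ᵥ γ = γ := hγ ▸ hJP ▸ mul_mulVec_mulVec_of_mul_eq_one hRP _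
  refine ⟨IsIdempotentElem.mul_mul_of_mul_mul_self_mul ?_, ?_⟩
  · rw [hΛpsd.sqrt_mul_sqrt, hΞΛΞ]
  · rw [hΛΞΛ, ← mulVec_mulVec, hJγ]

/-- In the restricted least squares set-up: with `A = σ²(X'X)⁻¹`,
`J = (X'X)⁻¹R'[R(X'X)⁻¹R']⁻¹`, `Ξ = Cov(β̂−β̃) = JRA`, `γ = E[β̃−β] = J(Rβ−r)` and
`Λ = A⁻¹`, the matrix `Λ^{1/2}ΞΛ^{1/2}` is idempotent and `ΛΞΛγ = Λγ`. -/
theorem restricted_ls_assumption_H3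
    (n k q : ℕ) (hq : q ≤ k) (X : Matrix (Fin n) (Fin k) ℝ)
    (hXX : (Xᵀ * X).PosDef) (hXXunit : IsUnit (Xᵀ * X))
    (R : Matrix (Fin q) (Fin k) ℝ) (hRrank : R.rank = q)
    (hRunit : IsUnit (R * (Xᵀ * X)⁻¹ * Rᵀ))
    (σ : ℝ) (hσ : 0 < σ) (β : Fin k → ℝ) (r : Fin q → ℝ)
    (A J' Ξ Λ : Matrix (Fin k) (Fin k) ℝ) (γ : Fin k → ℝ)
    (hA : A = σ ^ 2 • (Xᵀ * X)⁻¹)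
    (hJ : J' = (Xᵀ * X)⁻¹ * Rᵀ * (R * (Xᵀ * X)⁻¹ * Rᵀ)⁻¹ * R)
    (hΞ : Ξ = J' * A)
    (hγ : γ = ((Xᵀ * X)⁻¹ * Rᵀ * (R * (Xᵀ * X)⁻¹ * Rᵀ)⁻¹).mulVec (R.mulVec β - r))
    (hΛ : Λ = A⁻¹) (hΛpsd : Λ.PosSemidef) :
    (hΛpsd.sqrt * Ξ * hΛpsd.sqrt) * (hΛpsd.sqrt * Ξ * hΛpsd.sqrt)
        = hΛpsd.sqrt * Ξ * hΛpsd.sqrt ∧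
      (Λ * Ξ * Λ).mulVec γ = Λ.mulVec γ :=
  restricted_ls_assumption_H3_general n k q X hXXunit R hRunit σ hσ β r A J' Ξ Λ γ hA hJ hΞ hγ hΛ
    hΛpsd
end
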